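/- Let S be a simply-connected shape in the triangular grid. Then the number of outer boundary points of S is at least the diameter of S (w.r.t. dist_S). -/

import Mathlib

/-- The triangular grid: the simple graph on ℤ × ℤ where two vertices are adjacent
iff their difference lies in {(1,0),(−1,0),(0,1),(0,−1),(1,−1),(−1,1)}. -/
def triGrid : SimpleGraph (ℤ × ℤ) where
  Adj u v := (u.1 - v.1, u.2 - v.2) ∈
    ({(1,0), (-1,0), (0,1), (0,-1), (1,-1), (-1,1)} : Set (ℤ × ℤ))
  symm := by
    constructor
    intro u v h
    simp only [Set.mem_insert_iff, Set.mem_singleton_iff, Prod.mk.injEq] at h ⊢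
    omega
  loopless := by
    constructor
    intro u h
    simp only [Set.mem_insert_iff, Set.mem_singleton_iff, Prod.mk.injEq] at h
    omega

/-- The subgraph of the triangular grid induced by `S`, viewed as a graph on all of
ℤ × ℤ (vertices outside `S` are isolated): an edge requires both endpoints in `S`. -/
def gOn (S : Set (ℤ × ℤ)) : SimpleGraph (ℤ × ℤ) where
  Adj u v := triGrid.Adj u v ∧ u ∈ S ∧ v ∈ S
  symm := ⟨fun u v h => ⟨triGrid.adj_symm h.1, h.2.2, h.2.1⟩⟩
  loopless := ⟨fun u h => triGrid.irrefl h.1⟩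

/-- A shape: a finite nonempty set of grid points. -/
def IsShape (S : Set (ℤ × ℤ)) : Prop := S.Finite ∧ S.Nonempty

/-- The subgraph of the grid induced by `S` is connected. -/
def ShapeConnected (S : Set (ℤ × ℤ)) : Prop :=
  ∀ u ∈ S, ∀ v ∈ S, (gOn S).Reachable u v

/-- A connected shape. -/
def ConnectedShape (S : Set (ℤ × ℤ)) : Prop := IsShape S ∧ ShapeConnected S

/-- The connected component of `x` in the subgraph induced by the complement of `S`. -/
def compOf (S : Set (ℤ × ℤ)) (x : ℤ × ℤ) : Set (ℤ × ℤ) :=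
  {y | (gOn Sᶜ).Reachable x y}

/-- A hole point of `S`: a point lying in a finite connected component of the
complement of `S`. -/
def IsHolePoint (S : Set (ℤ × ℤ)) (x : ℤ × ℤ) : Prop :=
  x ∉ S ∧ (compOf S x).Finite

/-- A simply-connected shape: connected and with no holes. -/
def SimplyConnectedShape (S : Set (ℤ × ℤ)) : Prop :=
  ConnectedShape S ∧ ∀ x, ¬ IsHolePoint S x

/-- Graph distance within the subgraph induced by `S`. -/
noncomputable def distS (S : Set (ℤ × ℤ)) (u v : ℤ × ℤ) : ℕ := (gOn S).dist u v

/-- Diameter of the shape `S` w.r.t. `distS`. -/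
noncomputable def shapeDiam (S : Set (ℤ × ℤ)) : ℕ :=
  sSup {d : ℕ | ∃ u ∈ S, ∃ v ∈ S, distS S u v = d}

/-- A boundary point of `S`: a point of `S` with a neighbor outside `S`. -/
def IsBoundaryPt (S : Set (ℤ × ℤ)) (v : ℤ × ℤ) : Prop :=
  v ∈ S ∧ ∃ w, triGrid.Adj v w ∧ w ∉ S

/-- An outer boundary point of `S`: a point of `S` with a neighbor lying in an
infinite connected component of the complement of `S`. -/
def IsOuterBoundaryPt (S : Set (ℤ × ℤ)) (v : ℤ × ℤ) : Prop :=
  v ∈ S ∧ ∃ w, triGrid.Adj v w ∧ w ∉ S ∧ (compOf S w).Infinite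

/-- An interior point of `S`: a point of `S` all of whose neighbors lie in `S`. -/
def IsInteriorPt (S : Set (ℤ × ℤ)) (v : ℤ × ℤ) : Prop :=
  v ∈ S ∧ ∀ w, triGrid.Adj v w → w ∈ S

/-- The six neighbor directions of a grid point, in cyclic order. -/
def dirs : Fin 6 → ℤ × ℤ := ![(1,0), (0,1), (-1,1), (-1,0), (0,-1), (1,-1)]

/-- The `i`-th neighbor of `v`, in the cyclic order of the 6-cycle of neighbors. -/
def nbr (v : ℤ × ℤ) (i : Fin 6) : ℤ × ℤ := (v.1 + (dirs i).1, v.2 + (dirs i).2)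

/-- The neighbors of `v` lying in `S`. -/
def nbrsIn (S : Set (ℤ × ℤ)) (v : ℤ × ℤ) : Set (ℤ × ℤ) :=
  {w | triGrid.Adj v w ∧ w ∈ S}

/-- `v` is redundant w.r.t. `S`: the neighbors of `v` in `S` induce a connected
subgraph of the grid. -/
def Redundant (S : Set (ℤ × ℤ)) (v : ℤ × ℤ) : Prop :=
  ∀ u ∈ nbrsIn S v, ∀ w ∈ nbrsIn S v, (gOn (nbrsIn S v)).Reachable u w

/-- `v` is erodable w.r.t. `S`: redundant and an outer boundary point of `S`. -/
def Erodable (S : Set (ℤ × ℤ)) (v : ℤ × ℤ) : Prop :=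
  Redundant S v ∧ IsOuterBoundaryPt S v

open Fin.NatCast in
/-- A set of indices of neighbors that is an arc: a nonempty set of consecutive
positions in the cyclic order. -/
def IsArc (I : Set (Fin 6)) : Prop :=
  ∃ (a : Fin 6) (len : ℕ), 0 < len ∧ len ≤ 6 ∧
    I = {i | ∃ k : ℕ, k < len ∧ i = a + (k : Fin 6)}

/-- The index set of the neighbors of `v` lying outside `S`. -/
def outIdx (S : Set (ℤ × ℤ)) (v : ℤ × ℤ) : Set (Fin 6) := {i | nbr v i ∉ S}

/-- A maximal arc of `v` w.r.t. `S`: a maximal arc of consecutive neighbors of `v`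
none of which lies in `S`. -/
def IsMaximalArc (S : Set (ℤ × ℤ)) (v : ℤ × ℤ) (I : Set (Fin 6)) : Prop :=
  IsArc I ∧ (∀ i ∈ I, nbr v i ∉ S) ∧
  ∀ J : Set (Fin 6), IsArc J → (∀ i ∈ J, nbr v i ∉ S) → I ⊆ J → I = J

/-- `v` is SCE (strictly convex and erodable) w.r.t. `S`: the neighbors of `v`
outside `S` form a single (maximal) arc of at least 3 points, and some neighbor of
`v` lies in an infinite connected component of the complement of `S`. -/
def SCE (S : Set (ℤ × ℤ)) (v : ℤ × ℤ) : Prop :=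
  IsArc (outIdx S v) ∧ 3 ≤ (outIdx S v).ncard ∧
  ∃ i : Fin 6, nbr v i ∉ S ∧ (compOf S (nbr v i)).Infinite

/-- The level set `L_i` of `l` in `S`. -/
noncomputable def levelSet (S : Set (ℤ × ℤ)) (l : ℤ × ℤ) (i : ℕ) : Set (ℤ × ℤ) :=
  {u ∈ S | distS S l u = i}

/-- The closed neighborhood `N_i` of `l` in `S`. -/
noncomputable def closedNbhd (S : Set (ℤ × ℤ)) (l : ℤ × ℤ) (i : ℕ) : Set (ℤ × ℤ) :=
  {u ∈ S | distS S l u ≤ i}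

/-- `v ∈ L_i` is `(i,k)`-SCE-related: some `u ∈ L_i` is SCE w.r.t. `N_i` and is at
distance at most `k` from `v` within the subgraph induced by `L_i`. -/
noncomputable def SCERelated (S : Set (ℤ × ℤ)) (l : ℤ × ℤ) (i k : ℕ) (v : ℤ × ℤ) : Prop :=
  ∃ u ∈ levelSet S l i, SCE (closedNbhd S l i) u ∧
    (gOn (levelSet S l i)).Reachable v u ∧ (gOn (levelSet S l i)).dist v u ≤ k
-- ===================== auxiliary development =====================
namespace Stmt1Aux

abbrev V2 := ℤ × ℤ

/-- the six directions as a Finset -/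
def D6 : Finset V2 := {(1,0), (-1,0), (0,1), (0,-1), (1,-1), (-1,1)}

def shiftP (p δ : V2) : V2 := (p.1 + δ.1, p.2 + δ.2)

def negD (δ : V2) : V2 := (-δ.1, -δ.2)

lemma mem_D6_iff {δ : V2} : δ ∈ D6 ↔
    δ = (1,0) ∨ δ = (-1,0) ∨ δ = (0,1) ∨ δ = (0,-1) ∨ δ = (1,-1) ∨ δ = (-1,1) := by
  simp [D6]

lemma negD_mem {δ : V2} (h : δ ∈ D6) : negD δ ∈ D6 := by
  rw [mem_D6_iff] at h ⊢
  rcases h with h|h|h|h|h|h <;> subst h <;> simp [negD]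

lemma triGrid_adj_iff {p q : V2} : triGrid.Adj p q ↔ ∃ δ ∈ D6, q = shiftP p δ := by
  constructor
  · intro h
    simp only [triGrid, Set.mem_insert_iff, Set.mem_singleton_iff, Prod.mk.injEq] at h
    rcases h with ⟨h1,h2⟩|⟨h1,h2⟩|⟨h1,h2⟩|⟨h1,h2⟩|⟨h1,h2⟩|⟨h1,h2⟩
    · exact ⟨(-1,0), by simp [mem_D6_iff], by simp [shiftP, Prod.ext_iff]; omega⟩
    · exact ⟨(1,0), by simp [mem_D6_iff], by simp [shiftP, Prod.ext_iff]; omega⟩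
    · exact ⟨(0,-1), by simp [mem_D6_iff], by simp [shiftP, Prod.ext_iff]; omega⟩
    · exact ⟨(0,1), by simp [mem_D6_iff], by simp [shiftP, Prod.ext_iff]; omega⟩
    · exact ⟨(-1,1), by simp [mem_D6_iff], by simp [shiftP, Prod.ext_iff]; omega⟩
    · exact ⟨(1,-1), by simp [mem_D6_iff], by simp [shiftP, Prod.ext_iff]; omega⟩
  · rintro ⟨δ, hδ, rfl⟩
    rw [mem_D6_iff] at hδ
    simp only [triGrid, Set.mem_insert_iff, Set.mem_singleton_iff, Prod.mk.injEq]
    rcases hδ with h|h|h|h|h|h <;> subst h <;> simp [shiftP] <;> omega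

lemma gOn_adj_iff {S : Set V2} {p q : V2} :
    (gOn S).Adj p q ↔ triGrid.Adj p q ∧ p ∈ S ∧ q ∈ S := Iff.rfl

/-- the three axes -/
def ax : Fin 3 → V2 := ![(1,0), (0,1), (1,-1)]

/-- the Lipschitz functionals -/
def lam : Fin 3 → V2 → ℤ := ![fun p => 2*p.1 + p.2, fun p => p.1 + 2*p.2, fun p => p.1 - p.2]

lemma lam_step_le {k : Fin 3} {p q : V2} (h : triGrid.Adj p q) :
    lam k q - lam k p ≤ 2 ∧ -2 ≤ lam k q - lam k p := by
  rw [triGrid_adj_iff] at h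
  obtain ⟨δ, hδ, rfl⟩ := h
  rw [mem_D6_iff] at hδ
  fin_cases k <;>
    rcases hδ with h|h|h|h|h|h <;> subst h <;> simp [lam, shiftP] <;> omega

lemma lam_step_eq_two {k : Fin 3} {p q : V2} (h : triGrid.Adj p q)
    (h2 : lam k q - lam k p = 2) : q = shiftP p (ax k) := by
  rw [triGrid_adj_iff] at h
  obtain ⟨δ, hδ, rfl⟩ := h
  rw [mem_D6_iff] at hδ
  fin_cases k <;> rcases hδ with h|h|h|h|h|h <;> subst h <;>
    simp [lam, shiftP, ax, Prod.ext_iff] at h2 ⊢ <;> omega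

lemma lam_step_eq_negtwo {k : Fin 3} {p q : V2} (h : triGrid.Adj p q)
    (h2 : lam k q - lam k p = -2) : q = shiftP p (negD (ax k)) := by
  rw [triGrid_adj_iff] at h
  obtain ⟨δ, hδ, rfl⟩ := h
  rw [mem_D6_iff] at hδ
  fin_cases k <;> rcases hδ with h|h|h|h|h|h <;> subst h <;>
    simp [lam, shiftP, ax, negD, Prod.ext_iff] at h2 ⊢ <;> omega

/-- every adjacency step is along exactly one axis-sign -/
lemma step_axis {p q : V2} (h : triGrid.Adj p q) :
    ∃ k : Fin 3, q = shiftP p (ax k) ∨ q = shiftP p (negD (ax k)) := by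
  rw [triGrid_adj_iff] at h
  obtain ⟨δ, hδ, rfl⟩ := h
  rw [mem_D6_iff] at hδ
  rcases hδ with h|h|h|h|h|h <;> subst h
  · exact ⟨0, Or.inl (by simp [shiftP, ax])⟩
  · exact ⟨0, Or.inr (by simp [shiftP, ax, negD])⟩
  · exact ⟨1, Or.inl (by simp [shiftP, ax])⟩
  · exact ⟨1, Or.inr (by simp [shiftP, ax, negD])⟩
  · exact ⟨2, Or.inl (by simp [shiftP, ax])⟩
  · exact ⟨2, Or.inr (by simp [shiftP, ax, negD])⟩

end Stmt1Aux
namespace Stmt1Aux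
open SimpleGraph

/-- a sub-segment of a walk gives a walk between the corresponding getVerts -/
lemma walkSeg {G : SimpleGraph V2} {u v : V2} (p : G.Walk u v) :
    ∀ (t i : ℕ), i + t ≤ p.length →
      ∃ q : G.Walk (p.getVert i) (p.getVert (i + t)), q.length = t := by
  intro t
  induction t with
  | zero => intro i _; exact ⟨SimpleGraph.Walk.nil.copy rfl (by rw [Nat.add_zero]), by simp⟩
  | succ t ih =>
    intro i h
    obtain ⟨q, hq⟩ := ih i (by omega)
    refine ⟨(q.concat (p.adj_getVert_succ (by omega))).copy rfl rfl, ?_⟩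
    rw [SimpleGraph.Walk.length_copy, SimpleGraph.Walk.length_concat, hq]

lemma walkSeg' {G : SimpleGraph V2} {u v : V2} (p : G.Walk u v) {i j : ℕ}
    (hij : i ≤ j) (hj : j ≤ p.length) :
    ∃ q : G.Walk (p.getVert i) (p.getVert j), q.length = j - i := by
  obtain ⟨q, hq⟩ := walkSeg p (j - i) i (by omega)
  have h : i + (j - i) = j := by omega
  exact ⟨q.copy rfl (by rw [h]), by simpa using hq⟩

lemma reachable_getVert {G : SimpleGraph V2} {u v : V2} (p : G.Walk u v) {i j : ℕ}
    (hij : i ≤ j) (hj : j ≤ p.length) : G.Reachable (p.getVert i) (p.getVert j) := by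
  obtain ⟨q, _⟩ := walkSeg' p hij hj
  exact ⟨q⟩

lemma dist_getVert_le {G : SimpleGraph V2} {u v : V2} (p : G.Walk u v) {i j : ℕ}
    (hij : i ≤ j) (hj : j ≤ p.length) : G.dist (p.getVert i) (p.getVert j) ≤ j - i := by
  obtain ⟨q, hq⟩ := walkSeg' p hij hj
  exact hq ▸ SimpleGraph.dist_le q

/-- squeeze: on a geodesic walk, getVert distances are exact -/
lemma dist_getVert_eq {G : SimpleGraph V2} {u v : V2} (p : G.Walk u v)
    (hlen : p.length = G.dist u v) {i j : ℕ} (hij : i ≤ j) (hj : j ≤ p.length) :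
    G.dist (p.getVert i) (p.getVert j) = j - i := by
  refine le_antisymm (dist_getVert_le p hij hj) ?_
  by_contra hlt
  push_neg at hlt
  obtain ⟨r, hr⟩ := (reachable_getVert p hij hj).exists_walk_length_eq_dist
  obtain ⟨q1, hq1⟩ := walkSeg' p (Nat.zero_le i) (le_trans hij hj)
  obtain ⟨q3, hq3⟩ := walkSeg' p hj (le_refl p.length)
  have q1' : G.Walk u (p.getVert i) := q1.copy p.getVert_zero rfl
  have q3' : G.Walk (p.getVert j) v := q3.copy rfl p.getVert_length
  have hlen1 : ((((q1.copy p.getVert_zero rfl).append r).append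
      (q3.copy rfl p.getVert_length)).length) < p.length := by
    rw [SimpleGraph.Walk.length_append, SimpleGraph.Walk.length_append,
      SimpleGraph.Walk.length_copy, SimpleGraph.Walk.length_copy, hq1, hq3, hr]
    omega
  have := SimpleGraph.dist_le (((q1.copy p.getVert_zero rfl).append r).append
      (q3.copy rfl p.getVert_length))
  omega

/-- lam changes by at most 2 per step along a walk in `gOn S` -/
lemma lam_walk {S : Set V2} {k : Fin 3} {a b : V2} (p : (gOn S).Walk a b) :
    lam k b - lam k a ≤ 2 * p.length ∧ -(2 * (p.length : ℤ)) ≤ lam k b - lam k a := by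
  induction p with
  | nil => simp
  | cons h q ih =>
    have hstep := lam_step_le (k := k) h.1
    rw [SimpleGraph.Walk.length_cons]
    push_cast
    constructor <;> omega

lemma lam_dist {S : Set V2} {k : Fin 3} {a b : V2} (h : (gOn S).Reachable a b) :
    lam k b - lam k a ≤ 2 * (gOn S).dist a b ∧
      -(2 * ((gOn S).dist a b : ℤ)) ≤ lam k b - lam k a := by
  obtain ⟨p, hp⟩ := h.exists_walk_length_eq_dist
  have := lam_walk (k := k) p
  rw [hp] at this
  exact this

def rayP (p δ : V2) (t : ℕ) : V2 := (p.1 + t * δ.1, p.2 + t * δ.2)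

@[simp] lemma rayP_zero (p δ : V2) : rayP p δ 0 = p := by simp [rayP]

lemma rayP_succ (p δ : V2) (t : ℕ) : rayP p δ (t + 1) = shiftP (rayP p δ t) δ := by
  simp [rayP, shiftP, Prod.ext_iff]; push_cast; constructor <;> ring

lemma lam_rayP (k : Fin 3) (p : V2) (t : ℕ) :
    lam k (rayP p (ax k) t) - lam k p = 2 * t := by
  fin_cases k <;> simp [lam, rayP, ax] <;> ring

lemma lam_rayP_neg (k : Fin 3) (p : V2) (t : ℕ) :
    lam k (rayP p (negD (ax k)) t) - lam k p = -(2 * t) := by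
  fin_cases k <;> simp [lam, rayP, ax, negD] <;> ring

lemma adj_rayP {δ : V2} (hδ : δ ∈ D6) (p : V2) (t : ℕ) :
    triGrid.Adj (rayP p δ t) (rayP p δ (t + 1)) := by
  rw [triGrid_adj_iff]
  exact ⟨δ, hδ, rayP_succ p δ t⟩

/-- walking along a straight segment inside S -/
lemma dist_rayP_le {S : Set V2} {δ : V2} (hδ : δ ∈ D6) {p : V2} {t : ℕ}
    (hS : ∀ s, s ≤ t → rayP p δ s ∈ S) :
    (gOn S).Reachable p (rayP p δ t) ∧ (gOn S).dist p (rayP p δ t) ≤ t := by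
  induction t with
  | zero => simp [SimpleGraph.Reachable.refl]
  | succ t ih =>
    obtain ⟨hre, hd⟩ := ih (fun s hs => hS s (by omega))
    have hadj : (gOn S).Adj (rayP p δ t) (rayP p δ (t + 1)) :=
      ⟨adj_rayP hδ p t, hS t (by omega), hS (t + 1) (by omega)⟩
    obtain ⟨q, hq⟩ := hre.exists_walk_length_eq_dist
    refine ⟨⟨q.concat hadj⟩, ?_⟩
    have := SimpleGraph.dist_le (q.concat hadj)
    rw [SimpleGraph.Walk.length_concat, hq] at this
    omega

end Stmt1Aux
namespace Stmt1Aux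
open SimpleGraph

lemma D6_ne_zero {δ : V2} (hδ : δ ∈ D6) : δ.1 ≠ 0 ∨ δ.2 ≠ 0 := by
  rw [mem_D6_iff] at hδ
  rcases hδ with h|h|h|h|h|h <;> subst h <;> simp

lemma rayP_injective {p δ : V2} (hδ : δ ∈ D6) : Function.Injective (rayP p δ) := by
  intro s t h
  simp only [rayP, Prod.ext_iff] at h
  rcases D6_ne_zero hδ with h1 | h2
  · have := h.1
    have : (s : ℤ) * δ.1 = (t : ℤ) * δ.1 := by omega
    have : (s : ℤ) = t := mul_right_cancel₀ h1 this
    exact_mod_cast this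
  · have := h.2
    have : (s : ℤ) * δ.2 = (t : ℤ) * δ.2 := by omega
    have : (s : ℤ) = t := mul_right_cancel₀ h2 this
    exact_mod_cast this

lemma exit_exists {S : Set V2} (hfin : S.Finite) {p δ : V2} (hδ : δ ∈ D6) :
    ∃ t, rayP p δ t ∉ S := by
  by_contra h
  push_neg at h
  exact (Set.infinite_of_injective_forall_mem (rayP_injective hδ) h) hfin

noncomputable def exitT (S : Set V2) (p δ : V2) : ℕ := sInf {t | rayP p δ t ∉ S}

noncomputable def endC (S : Set V2) (p δ : V2) : V2 := rayP p δ (exitT S p δ - 1)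

lemma exitT_not_mem {S : Set V2} (hfin : S.Finite) {p δ : V2} (hδ : δ ∈ D6) :
    rayP p δ (exitT S p δ) ∉ S :=
  Nat.sInf_mem (exit_exists hfin hδ)

lemma exitT_mem {S : Set V2} {p δ : V2} {s : ℕ} (hs : s < exitT S p δ) :
    rayP p δ s ∈ S := by
  have := Nat.notMem_of_lt_sInf hs
  simpa using this

lemma exitT_pos {S : Set V2} (hfin : S.Finite) {p δ : V2} (hp : p ∈ S) (hδ : δ ∈ D6) :
    1 ≤ exitT S p δ := by
  by_contra h
  push_neg at h
  have h0 : exitT S p δ = 0 := by omega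
  have := exitT_not_mem hfin (p := p) hδ
  rw [h0] at this
  simp at this
  exact this hp

lemma endC_mem {S : Set V2} (hfin : S.Finite) {p δ : V2} (hp : p ∈ S) (hδ : δ ∈ D6) :
    endC S p δ ∈ S :=
  exitT_mem (by have := exitT_pos hfin hp hδ; omega)

lemma shiftP_rayP (p δ : V2) (s : ℕ) : shiftP (rayP p δ s) δ = rayP p δ (s + 1) :=
  (rayP_succ p δ s).symm

lemma shiftP_rayP_neg (p δ : V2) (s : ℕ) :
    shiftP (rayP p δ (s + 1)) (negD δ) = rayP p δ s := by
  simp [rayP, shiftP, negD, Prod.ext_iff]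
  push_cast
  constructor <;> ring

lemma endC_shift_not_mem {S : Set V2} (hfin : S.Finite) {p δ : V2} (hp : p ∈ S)
    (hδ : δ ∈ D6) : shiftP (endC S p δ) δ ∉ S := by
  have h1 := exitT_pos hfin hp hδ
  have : endC S p δ = rayP p δ (exitT S p δ - 1) := rfl
  rw [this, shiftP_rayP]
  have : exitT S p δ - 1 + 1 = exitT S p δ := by omega
  rw [this]
  exact exitT_not_mem hfin hδ

/-- two cells with the same end-of-segment lie on a common straight in-S segment -/
lemma endC_same {S : Set V2} (hfin : S.Finite) {p q δ : V2} (hp : p ∈ S) (hq : q ∈ S)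
    (hδ : δ ∈ D6) (h : endC S p δ = endC S q δ) :
    (∃ t, q = rayP p δ t ∧ ∀ s, s ≤ t → rayP p δ s ∈ S) ∨
    (∃ t, p = rayP q δ t ∧ ∀ s, s ≤ t → rayP q δ s ∈ S) := by
  have hmp := exitT_pos hfin hp hδ
  have hmq := exitT_pos hfin hq hδ
  set mp := exitT S p δ with hmpdef
  set mq := exitT S q δ with hmqdef
  simp only [endC, rayP, Prod.ext_iff] at h
  rcases le_or_gt mq mp with hle | hlt
  · left
    refine ⟨mp - mq, ?_, fun s hs => exitT_mem (by omega)⟩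
    have c1 : ((mp - 1 : ℕ) : ℤ) = (mp : ℤ) - 1 := by omega
    have c2 : ((mq - 1 : ℕ) : ℤ) = (mq : ℤ) - 1 := by omega
    have c3 : ((mp - mq : ℕ) : ℤ) = (mp : ℤ) - mq := by omega
    simp only [rayP, Prod.ext_iff]
    rw [c1, c2] at h
    rw [c3]
    constructor <;> nlinarith [h.1, h.2]
  · right
    refine ⟨mq - mp, ?_, fun s hs => exitT_mem (by omega)⟩
    have c1 : ((mp - 1 : ℕ) : ℤ) = (mp : ℤ) - 1 := by omega
    have c2 : ((mq - 1 : ℕ) : ℤ) = (mq : ℤ) - 1 := by omega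
    have c3 : ((mq - mp : ℕ) : ℤ) = (mq : ℤ) - mp := by omega
    simp only [rayP, Prod.ext_iff]
    rw [c1, c2] at h
    rw [c3]
    constructor <;> nlinarith [h.1, h.2]

end Stmt1Aux
namespace Stmt1Aux

lemma last_step_axis {k : Fin 3} (g : ℕ → V2) {i j : ℕ} (hij : i < j)
    (hadj : ∀ s, i ≤ s → s < j → triGrid.Adj (g s) (g (s+1)))
    (htot : lam k (g j) - lam k (g i) = 2 * ((j - i : ℕ) : ℤ) ∨
            lam k (g j) - lam k (g i) = -(2 * ((j - i : ℕ) : ℤ))) :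
    g j = shiftP (g (j-1)) (ax k) ∨ g j = shiftP (g (j-1)) (negD (ax k)) := by
  set t := j - i with ht
  have ht1 : 1 ≤ t := by omega
  set F : ℕ → ℤ := fun s => lam k (g (i + s)) with hF
  have htele : ∑ s ∈ Finset.range t, (F (s+1) - F s) = F t - F 0 := Finset.sum_range_sub F t
  have hsplit : ∑ s ∈ Finset.range t, (F (s+1) - F s) =
      (∑ s ∈ Finset.range (t-1), (F (s+1) - F s)) + (F t - F (t-1)) := by
    have : t = (t-1) + 1 := by omega
    rw [this, Finset.sum_range_succ]
    congr 2 <;> omega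
  have hstepb : ∀ s, s < t → (F (s+1) - F s ≤ 2 ∧ -2 ≤ F (s+1) - F s) := by
    intro s hs
    have hadjs := hadj (i+s) (by omega) (by omega)
    have := lam_step_le (k := k) hadjs
    simp only [hF]
    have e : i + (s+1) = (i + s) + 1 := by omega
    rw [e]
    exact this
  have eFt : i + t = j := by omega
  have eFt1 : i + (t - 1) = j - 1 := by omega
  have hFt : F t = lam k (g j) := by simp only [hF]; rw [eFt]
  have hF0 : F 0 = lam k (g i) := by simp only [hF, Nat.add_zero]
  have hFt1 : F (t-1) = lam k (g (j-1)) := by simp only [hF]; rw [eFt1]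
  have hub : ∑ s ∈ Finset.range (t-1), (F (s+1) - F s) ≤ 2 * ((t-1 : ℕ) : ℤ) := by
    calc ∑ s ∈ Finset.range (t-1), (F (s+1) - F s)
        ≤ ∑ s ∈ Finset.range (t-1), (2 : ℤ) :=
          Finset.sum_le_sum (fun s hs => (hstepb s (by simp at hs; omega)).1)
      _ = 2 * ((t-1 : ℕ) : ℤ) := by simp [mul_comm]
  have hlb : -(2 * ((t-1 : ℕ) : ℤ)) ≤ ∑ s ∈ Finset.range (t-1), (F (s+1) - F s) := by
    calc -(2 * ((t-1 : ℕ) : ℤ)) = ∑ s ∈ Finset.range (t-1), (-2 : ℤ) := by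
          simp [mul_comm]
      _ ≤ ∑ s ∈ Finset.range (t-1), (F (s+1) - F s) :=
          Finset.sum_le_sum (fun s hs => (hstepb s (by simp at hs; omega)).2)
  have hlast := hstepb (t-1) (by omega)
  have e2 : t - 1 + 1 = t := by omega
  rw [e2] at hlast
  have hadjlast := hadj (j-1) (by omega) (by omega)
  have e3 : j - 1 + 1 = j := by omega
  rw [e3] at hadjlast
  have hcast : ((t : ℕ) : ℤ) = ((t - 1 : ℕ) : ℤ) + 1 := by omega
  rw [hFt, hF0] at htele
  rw [hFt, hFt1] at hsplit hlast
  rcases htot with hpos | hneg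
  · left
    apply lam_step_eq_two hadjlast
    omega
  · right
    apply lam_step_eq_negtwo hadjlast
    omega

end Stmt1Aux
namespace Stmt1Aux
open SimpleGraph

def axisP (g : ℕ → V2) (k : Fin 3) (s : ℕ) : Prop :=
  g (s+1) = shiftP (g s) (ax k) ∨ g (s+1) = shiftP (g s) (negD (ax k))

instance (g : ℕ → V2) (k : Fin 3) (s : ℕ) : Decidable (axisP g k s) := by
  unfold axisP; infer_instance

lemma ax_mem_D6 (k : Fin 3) : ax k ∈ D6 := by fin_cases k <;> decide

lemma shiftP_inj {p a b : V2} (h : shiftP p a = shiftP p b) : a = b := by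
  simp only [shiftP, Prod.ext_iff] at h ⊢
  omega

lemma axisP_unique {g : ℕ → V2} {s : ℕ} {k k' : Fin 3}
    (h : axisP g k s) (h' : axisP g k' s) : k = k' := by
  have hd : ax k = ax k' ∨ ax k = negD (ax k') ∨ negD (ax k) = ax k' ∨
      negD (ax k) = negD (ax k') := by
    rcases h with h|h <;> rcases h' with h'|h'
    · exact Or.inl (shiftP_inj (h.symm.trans h'))
    · exact Or.inr (Or.inl (shiftP_inj (h.symm.trans h')))
    · exact Or.inr (Or.inr (Or.inl (shiftP_inj (h.symm.trans h'))))
    · exact Or.inr (Or.inr (Or.inr (shiftP_inj (h.symm.trans h'))))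
  revert hd
  fin_cases k <;> fin_cases k' <;> decide

lemma axisP_exists {g : ℕ → V2} {s : ℕ} (h : triGrid.Adj (g s) (g (s+1))) :
    ∃ k, axisP g k s := step_axis h

/-- two distinct geodesic vertices with the same segment-end force the previous
step to be along the axis -/
lemma run_inj {S : Set V2} (hfin : S.Finite) {k : Fin 3} {δ : V2}
    (hδax : δ = ax k ∨ δ = negD (ax k)) {g : ℕ → V2} {d : ℕ}
    (hadjS : ∀ s, s < d → (gOn S).Adj (g s) (g (s+1)))
    (hdist : ∀ i j, i ≤ j → j ≤ d → (gOn S).dist (g i) (g j) = j - i)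
    (hmem : ∀ i, i ≤ d → g i ∈ S)
    {i j : ℕ} (hj : j ≤ d) (hij : i < j)
    (heq : endC S (g i) δ = endC S (g j) δ) :
    axisP g k (j-1) := by
  have hδ6 : δ ∈ D6 := by
    rcases hδax with h|h <;> subst h
    · exact ax_mem_D6 k
    · exact negD_mem (ax_mem_D6 k)
  have hi : i ≤ d := by omega
  have hdij : (gOn S).dist (g i) (g j) = j - i := hdist i j (by omega) hj
  have hadjT : ∀ s, i ≤ s → s < j → triGrid.Adj (g s) (g (s+1)) :=
    fun s _ h2 => (hadjS s (by omega)).1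
  have hfinal : lam k (g j) - lam k (g i) = 2 * ((j - i : ℕ) : ℤ) ∨
      lam k (g j) - lam k (g i) = -(2 * ((j - i : ℕ) : ℤ)) := by
    rcases endC_same hfin (hmem i hi) (hmem j hj) hδ6 heq with
      ⟨t, hgt, hcells⟩ | ⟨t, hgt, hcells⟩
    · -- g j = rayP (g i) δ t
      have hd2 := dist_rayP_le (S := S) hδ6 hcells
      rw [← hgt] at hd2
      have hlam := lam_dist (k := k) hd2.1
      rw [hdij] at hlam
      have hdle := hd2.2
      rw [hdij] at hdle
      rcases hδax with h|h <;> subst h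
      · have hl : lam k (g j) - lam k (g i) = 2 * t := by
          rw [hgt]; exact_mod_cast lam_rayP k (g i) t
        left; omega
      · have hl : lam k (g j) - lam k (g i) = -(2 * t) := by
          rw [hgt]; exact_mod_cast lam_rayP_neg k (g i) t
        right; omega
    · -- g i = rayP (g j) δ t
      have hd2 := dist_rayP_le (S := S) hδ6 hcells
      rw [← hgt] at hd2
      have hlam := lam_dist (k := k) hd2.1
      rw [SimpleGraph.dist_comm, hdij] at hlam
      have hdle := hd2.2
      rw [SimpleGraph.dist_comm, hdij] at hdle
      rcases hδax with h|h <;> subst h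
      · have hl : lam k (g i) - lam k (g j) = 2 * t := by
          rw [hgt]; exact_mod_cast lam_rayP k (g j) t
        right; omega
      · have hl : lam k (g i) - lam k (g j) = -(2 * t) := by
          rw [hgt]; exact_mod_cast lam_rayP_neg k (g j) t
        left; omega
  have hres := last_step_axis g hij hadjT hfinal
  unfold axisP
  have e : j - 1 + 1 = j := by omega
  rw [e]
  exact hres

end Stmt1Aux
namespace Stmt1Aux
open SimpleGraph

def RS (g : ℕ → V2) (d : ℕ) (k : Fin 3) : Finset ℕ :=
  insert 0 (((Finset.range d).filter (fun s => ¬ axisP g k s)).image (· + 1))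

lemma RS_le {g : ℕ → V2} {d : ℕ} {k : Fin 3} {i : ℕ} (h : i ∈ RS g d k) : i ≤ d := by
  simp only [RS, Finset.mem_insert, Finset.mem_image, Finset.mem_filter,
    Finset.mem_range] at h
  rcases h with h | ⟨s, ⟨hs, _⟩, rfl⟩
  · omega
  · omega

lemma RS_succ {g : ℕ → V2} {d : ℕ} {k : Fin 3} {s : ℕ} (h : s + 1 ∈ RS g d k) :
    ¬ axisP g k s := by
  simp only [RS, Finset.mem_insert, Finset.mem_image, Finset.mem_filter,
    Finset.mem_range] at h
  rcases h with h | ⟨s', ⟨_, hs'⟩, he⟩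
  · omega
  · have : s' = s := by omega
    exact this ▸ hs'

lemma RS_card {g : ℕ → V2} {d : ℕ} (k : Fin 3) :
    (RS g d k).card = 1 + ((Finset.range d).filter (fun s => ¬ axisP g k s)).card := by
  rw [RS, Finset.card_insert_of_notMem, Finset.card_image_of_injective _
    (add_left_injective 1)]
  · omega
  · simp

lemma RS_sum {g : ℕ → V2} {d : ℕ} (hadj : ∀ s, s < d → triGrid.Adj (g s) (g (s+1))) :
    (∑ k : Fin 3, (RS g d k).card) = 2 * d + 3 := by
  have h2 : (∑ k : Fin 3, ((Finset.range d).filter (fun s => ¬ axisP g k s)).card)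
      = 2 * d := by
    have hcf : ∀ k : Fin 3, ((Finset.range d).filter (fun s => ¬ axisP g k s)).card
        = ∑ s ∈ Finset.range d, (if ¬ axisP g k s then 1 else 0) := by
      intro k; rw [Finset.card_filter]
    simp_rw [hcf]
    rw [Finset.sum_comm]
    have hrow : ∀ s ∈ Finset.range d,
        (∑ k : Fin 3, (if ¬ axisP g k s then 1 else 0)) = 2 := by
      intro s hs
      simp only [Finset.mem_range] at hs
      obtain ⟨k0, hk0⟩ := axisP_exists (hadj s hs)
      have huniq : ∀ k, axisP g k s ↔ k = k0 := fun k =>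
        ⟨fun h => axisP_unique h hk0, fun h => h ▸ hk0⟩
      simp only [huniq]
      rw [Fin.sum_univ_three]
      fin_cases k0 <;> decide
    rw [Finset.sum_congr rfl hrow]
    simp [mul_comm, Finset.sum_const, Finset.card_range]
  have h3 : (∑ k : Fin 3, (RS g d k).card) =
      ∑ k : Fin 3, (1 + ((Finset.range d).filter (fun s => ¬ axisP g k s)).card) := by
    exact Finset.sum_congr rfl (fun k _ => RS_card k)
  rw [h3, Finset.sum_add_distrib, h2]
  simp [add_comm]

end Stmt1Aux
namespace Stmt1Aux
open SimpleGraph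

def dirOf (ke : Fin 3 × Bool) : V2 := if ke.2 then ax ke.1 else negD (ax ke.1)

lemma dirOf_inj : Function.Injective dirOf := by decide

lemma dirOf_mem (ke : Fin 3 × Bool) : dirOf ke ∈ D6 := by
  rcases ke with ⟨k, e⟩
  cases e
  · exact negD_mem (ax_mem_D6 k)
  · exact ax_mem_D6 k

lemma dirOf_ax (ke : Fin 3 × Bool) :
    dirOf ke = ax ke.1 ∨ dirOf ke = negD (ax ke.1) := by
  rcases ke with ⟨k, e⟩
  cases e
  · right; rfl
  · left; rfl

lemma negD_invol (δ : V2) : negD (negD δ) = δ := by simp [negD]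

lemma negD_ne_self {δ : V2} (h : δ ∈ D6) : negD δ ≠ δ := by
  rw [mem_D6_iff] at h
  rcases h with h|h|h|h|h|h <;> subst h <;> decide

lemma D6_card : D6.card = 6 := by decide

lemma card_filter_product (A : Finset V2) (P : V2 → V2 → Prop) [∀ b δ, Decidable (P b δ)] :
    ((A ×ˢ D6).filter (fun x => P x.1 x.2)).card
      = ∑ b ∈ A, (D6.filter (fun δ => P b δ)).card := by
  rw [Finset.card_eq_sum_card_fiberwise (f := Prod.fst) (t := A)
    (fun x hx => (Finset.mem_product.mp (Finset.mem_filter.mp hx).1).1)]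
  refine Finset.sum_congr rfl (fun b hb => ?_)
  apply Finset.card_bij (fun x _ => x.2)
  · intro x hx
    simp only [Finset.mem_filter, Finset.mem_product] at hx
    rcases hx with ⟨⟨⟨_, hδ⟩, hP⟩, hfst⟩
    simp only [Finset.mem_filter]
    exact ⟨hδ, by rwa [hfst] at hP⟩
  · intro x hx y hy hxy
    simp only [Finset.mem_filter, Finset.mem_product] at hx hy
    exact Prod.ext (hx.2.trans hy.2.symm) hxy
  · intro δ hδ
    simp only [Finset.mem_filter] at hδ
    refine ⟨(b, δ), ?_, rfl⟩
    simp only [Finset.mem_filter, Finset.mem_product]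
    exact ⟨⟨⟨hb, hδ.1⟩, hδ.2⟩, trivial⟩

end Stmt1Aux
namespace Stmt1Aux
open SimpleGraph

lemma key (S : Set V2) (hfin : S.Finite) (hconn : ShapeConnected S) {u v : V2}
    (hu : u ∈ S) (hv : v ∈ S) :
    (gOn S).dist u v ≤ {b | IsBoundaryPt S b}.ncard := by
  classical
  have hBfin : {b | IsBoundaryPt S b}.Finite := hfin.subset (fun b hb => hb.1)
  rw [Set.ncard_eq_toFinset_card _ hBfin]
  set Sf := hfin.toFinset with hSf
  set BfS := Sf.filter (fun b => ∃ δ ∈ D6, shiftP b δ ∉ S) with hBfS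
  have hBeq : hBfin.toFinset = BfS := by
    ext b
    simp only [Set.Finite.mem_toFinset, Set.mem_setOf_eq, hBfS, Finset.mem_filter, hSf,
      Set.Finite.mem_toFinset]
    constructor
    · rintro ⟨hb, w, hadj, hw⟩
      obtain ⟨δ, hδ, rfl⟩ := triGrid_adj_iff.mp hadj
      exact ⟨hb, δ, hδ, hw⟩
    · rintro ⟨hb, δ, hδ, hout⟩
      exact ⟨hb, shiftP b δ, triGrid_adj_iff.mpr ⟨δ, hδ, rfl⟩, hout⟩
  rw [hBeq]
  set d := (gOn S).dist u v with hd
  rcases Nat.eq_zero_or_pos d with h0 | hdpos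
  · omega
  obtain ⟨p, hp⟩ := (hconn u hu v hv).exists_walk_length_eq_dist
  set g : ℕ → V2 := p.getVert with hg
  have hlen : p.length = d := hp
  have hadjS : ∀ s, s < d → (gOn S).Adj (g s) (g (s+1)) :=
    fun s hs => p.adj_getVert_succ (by omega)
  have hadjT : ∀ s, s < d → triGrid.Adj (g s) (g (s+1)) := fun s hs => (hadjS s hs).1
  have hdist : ∀ i j, i ≤ j → j ≤ d → (gOn S).dist (g i) (g j) = j - i :=
    fun i j h1 h2 => dist_getVert_eq p hp h1 (by omega)
  have hmem : ∀ i, i ≤ d → g i ∈ S := by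
    intro i hi
    rcases Nat.lt_or_ge i d with h | h
    · exact (hadjS i h).2.1
    · have hieq : i = d := by omega
      have : g d = v := by
        rw [hg, ← hlen]
        exact p.getVert_length
      rw [hieq, this]
      exact hv
  have hnbr : ∀ b, b ∈ S → ∃ δ ∈ D6, shiftP b δ ∈ S := by
    intro b hb
    by_cases hbu : b = u
    · have h01 := hadjS 0 hdpos
      obtain ⟨δ, hδ, he⟩ := triGrid_adj_iff.mp h01.1
      have hg0 : g 0 = u := p.getVert_zero
      exact ⟨δ, hδ, by rw [hbu, ← hg0, ← he]; exact h01.2.2⟩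
    · obtain ⟨q⟩ := hconn b hb u hu
      cases q with
      | nil => exact absurd rfl hbu
      | cons hq q' =>
        obtain ⟨δ, hδ, he⟩ := triGrid_adj_iff.mp hq.1
        exact ⟨δ, hδ, he ▸ hq.2.2⟩
  -- the run-end injection images
  set Φ : (Fin 3 × Bool) → ℕ → V2 × V2 :=
    fun ke i => (endC S (g i) (dirOf ke), dirOf ke) with hΦ
  set IMG : Finset (V2 × V2) :=
    Finset.univ.biUnion (fun ke => (RS g d ke.1).image (Φ ke)) with hIMG
  have hcore : ∀ ke : Fin 3 × Bool, ∀ i j, i ∈ RS g d ke.1 → j ∈ RS g d ke.1 →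
      i < j → Φ ke i ≠ Φ ke j := by
    intro ke i j hi hj hij heq
    have heqend : endC S (g i) (dirOf ke) = endC S (g j) (dirOf ke) :=
      congrArg Prod.fst heq
    have hax := run_inj hfin (dirOf_ax ke) hadjS hdist hmem (RS_le hj) hij heqend
    have hj1 : j - 1 + 1 = j := by omega
    exact RS_succ (by rw [hj1]; exact hj) hax
  have hinj : ∀ ke : Fin 3 × Bool, Set.InjOn (Φ ke) (RS g d ke.1) := by
    intro ke i hi j hj heq
    by_contra hne
    rcases lt_trichotomy i j with h | h | h
    · exact hcore ke i j hi hj h heq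
    · exact hne h
    · exact hcore ke j i hj hi h heq.symm
  have hdisj : ∀ ke ∈ (Finset.univ : Finset (Fin 3 × Bool)), ∀ ke' ∈ Finset.univ,
      ke ≠ ke' → Disjoint ((RS g d ke.1).image (Φ ke)) ((RS g d ke'.1).image (Φ ke')) := by
    intro ke _ ke' _ hne
    rw [Finset.disjoint_left]
    rintro x hx hx'
    obtain ⟨i, _, rfl⟩ := Finset.mem_image.mp hx
    obtain ⟨i', _, heq⟩ := Finset.mem_image.mp hx'
    have : dirOf ke' = dirOf ke := congrArg Prod.snd heq
    exact hne (dirOf_inj this).symm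
  have hIMGcard : IMG.card = 4 * d + 6 := by
    rw [hIMG, Finset.card_biUnion hdisj]
    have hterm : ∀ ke : Fin 3 × Bool, ((RS g d ke.1).image (Φ ke)).card
        = (RS g d ke.1).card := by
      intro ke
      exact Finset.card_image_of_injOn (hinj ke)
    rw [Finset.sum_congr rfl (fun ke _ => hterm ke)]
    rw [Fintype.sum_prod_type]
    have : ∀ k : Fin 3, (∑ _e : Bool, (RS g d k).card) = 2 * (RS g d k).card := by
      intro k; simp [two_mul]
    rw [Finset.sum_congr rfl (fun k _ => this k)]
    rw [← Finset.mul_sum, RS_sum hadjT]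
    ring
  -- leaves
  set Lf := Sf.filter (fun b => (D6.filter (fun δ => shiftP b δ ∈ S)).card = 1) with hLf
  set offLf := Lf.filter (fun b => ∀ i, i ≤ d → g i ≠ b) with hoffLf
  set LA := (offLf ×ˢ D6).filter
    (fun x => shiftP x.1 x.2 ∉ S ∧ shiftP x.1 (negD x.2) ∉ S) with hLA
  have hLAcard : LA.card = 4 * offLf.card := by
    rw [hLA, card_filter_product offLf (fun b δ => shiftP b δ ∉ S ∧ shiftP b (negD δ) ∉ S)]
    have hper : ∀ b ∈ offLf,
        (D6.filter (fun δ => shiftP b δ ∉ S ∧ shiftP b (negD δ) ∉ S)).card = 4 := by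
      intro b hb
      have hbLf : b ∈ Lf := (Finset.mem_filter.mp hb).1
      have hcard1 : (D6.filter (fun δ => shiftP b δ ∈ S)).card = 1 :=
        (Finset.mem_filter.mp hbLf).2
      obtain ⟨δ0, hδ0⟩ := Finset.card_eq_one.mp hcard1
      have hδ0mem : δ0 ∈ D6 ∧ shiftP b δ0 ∈ S := by
        have : δ0 ∈ D6.filter (fun δ => shiftP b δ ∈ S) := by
          rw [hδ0]; exact Finset.mem_singleton_self δ0
        exact Finset.mem_filter.mp this
      have hinS : ∀ δ, δ ∈ D6 → shiftP b δ ∈ S → δ = δ0 := by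
        intro δ h1 h2
        have : δ ∈ D6.filter (fun δ => shiftP b δ ∈ S) := Finset.mem_filter.mpr ⟨h1, h2⟩
        rw [hδ0] at this
        exact Finset.mem_singleton.mp this
      have hfeq : D6.filter (fun δ => shiftP b δ ∉ S ∧ shiftP b (negD δ) ∉ S)
          = D6 \ {δ0, negD δ0} := by
        ext δ
        simp only [Finset.mem_filter, Finset.mem_sdiff, Finset.mem_insert,
          Finset.mem_singleton, not_or]
        constructor
        · rintro ⟨hδ, h1, h2⟩
          refine ⟨hδ, ?_, ?_⟩
          · rintro rfl; exact h1 hδ0mem.2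
          · rintro rfl; rw [negD_invol] at h2; exact h2 hδ0mem.2
        · rintro ⟨hδ, h1, h2⟩
          refine ⟨hδ, ?_, ?_⟩
          · intro hin; exact h1 (hinS δ hδ hin)
          · intro hin
            have := hinS (negD δ) (negD_mem hδ) hin
            apply h2
            rw [← this, negD_invol]
      rw [hfeq, Finset.card_sdiff_of_subset]
      · have : ({δ0, negD δ0} : Finset V2).card = 2 := by
          rw [Finset.card_insert_of_notMem (by
            simp only [Finset.mem_singleton]
            exact fun h => negD_ne_self hδ0mem.1 h.symm), Finset.card_singleton]
        rw [this, D6_card]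
      · intro δ hδ
        simp only [Finset.mem_insert, Finset.mem_singleton] at hδ
        rcases hδ with rfl | rfl
        · exact hδ0mem.1
        · exact negD_mem hδ0mem.1
    rw [Finset.sum_congr rfl hper, Finset.sum_const, smul_eq_mul, mul_comm]
  have hLle : Lf.card ≤ offLf.card + 2 := by
    have hsub : Lf ⊆ offLf ∪ {g 0, g d} := by
      intro b hb
      by_cases hoff : ∀ i, i ≤ d → g i ≠ b
      · exact Finset.mem_union_left _ (Finset.mem_filter.mpr ⟨hb, hoff⟩)
      · push_neg at hoff
        obtain ⟨i, hid, hgi⟩ := hoff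
        have hi0d : i = 0 ∨ i = d := by
          by_contra hmid
          push_neg at hmid
          have h1 : 1 ≤ i := by
            rcases Nat.eq_zero_or_pos i with h | h
            · exact absurd h hmid.1
            · exact h
          have hprev := hadjT (i-1) (by omega)
          have e : i - 1 + 1 = i := by omega
          rw [e] at hprev
          have hnext := hadjT i (by omega)
          obtain ⟨δm, hδm, hem⟩ := triGrid_adj_iff.mp hprev.symm
          obtain ⟨δp, hδp, hep⟩ := triGrid_adj_iff.mp hnext
          have hm : δm ∈ D6.filter (fun δ => shiftP b δ ∈ S) := by
            rw [Finset.mem_filter]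
            refine ⟨hδm, ?_⟩
            rw [← hgi, ← hem]
            exact hmem (i-1) (by omega)
          have hpm : δp ∈ D6.filter (fun δ => shiftP b δ ∈ S) := by
            rw [Finset.mem_filter]
            refine ⟨hδp, ?_⟩
            rw [← hgi, ← hep]
            exact hmem (i+1) (by omega)
          have hneq : g (i-1) ≠ g (i+1) := by
            intro hsame
            have hdd := hdist (i-1) (i+1) (by omega) (by omega)
            rw [hsame, SimpleGraph.dist_self] at hdd
            omega
          have hδne : δm ≠ δp := by
            intro hsame
            apply hneq
            rw [hem, hep, hsame]
          have hss : ({δm, δp} : Finset V2) ⊆ D6.filter (fun δ => shiftP b δ ∈ S) := by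
            intro δ hδ
            simp only [Finset.mem_insert, Finset.mem_singleton] at hδ
            rcases hδ with rfl | rfl
            · exact hm
            · exact hpm
          have hc2 := Finset.card_le_card hss
          rw [Finset.card_insert_of_notMem (by simp [hδne]), Finset.card_singleton] at hc2
          have := (Finset.mem_filter.mp hb).2
          omega
        apply Finset.mem_union_right
        rcases hi0d with rfl | rfl
        · simp [← hgi]
        · simp [← hgi]
    calc Lf.card ≤ (offLf ∪ {g 0, g d}).card := Finset.card_le_card hsub
      _ ≤ offLf.card + ({g 0, g d} : Finset V2).card := Finset.card_union_le _ _
      _ ≤ offLf.card + 2 := by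
          have := Finset.card_insert_le (g 0) ({g d} : Finset V2)
          have h1 : ({g d} : Finset V2).card = 1 := Finset.card_singleton _
          omega
  set E := (Sf ×ˢ D6).filter (fun x => shiftP x.1 x.2 ∉ S) with hE
  have hIMGsub : IMG ⊆ E := by
    intro x hx
    rw [hIMG] at hx
    obtain ⟨ke, _, hx⟩ := Finset.mem_biUnion.mp hx
    obtain ⟨i, hi, rfl⟩ := Finset.mem_image.mp hx
    have hgi : g i ∈ S := hmem i (RS_le hi)
    rw [hE, Finset.mem_filter, Finset.mem_product]
    refine ⟨⟨?_, dirOf_mem ke⟩, ?_⟩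
    · rw [hSf, Set.Finite.mem_toFinset]
      exact endC_mem hfin hgi (dirOf_mem ke)
    · exact endC_shift_not_mem hfin hgi (dirOf_mem ke)
  have hLAsub : LA ⊆ E := by
    intro x hx
    rw [hLA] at hx
    rw [Finset.mem_filter, Finset.mem_product] at hx
    obtain ⟨⟨h1, h2⟩, h3, _⟩ := hx
    rw [hE, Finset.mem_filter, Finset.mem_product]
    have : x.1 ∈ Sf := (Finset.mem_filter.mp ((Finset.mem_filter.mp h1).1)).1
    exact ⟨⟨this, h2⟩, h3⟩
  have hdisj2 : Disjoint IMG LA := by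
    rw [Finset.disjoint_left]
    intro x hx hx'
    rw [hIMG] at hx
    obtain ⟨ke, _, hx⟩ := Finset.mem_biUnion.mp hx
    obtain ⟨i, hi, rfl⟩ := Finset.mem_image.mp hx
    rw [hLA, Finset.mem_filter, Finset.mem_product] at hx'
    obtain ⟨⟨hoff, _⟩, _, hneg⟩ := hx'
    have hgi : g i ∈ S := hmem i (RS_le hi)
    have hδm := dirOf_mem ke
    have hm1 : 1 ≤ exitT S (g i) (dirOf ke) := exitT_pos hfin hgi hδm
    have hoffp : ∀ i', i' ≤ d → g i' ≠ endC S (g i) (dirOf ke) :=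
      (Finset.mem_filter.mp hoff).2
    rcases Nat.eq_zero_or_pos (exitT S (g i) (dirOf ke) - 1) with hz | hpos
    · apply hoffp i (RS_le hi)
      show g i = endC S (g i) (dirOf ke)
      rw [endC, hz, rayP_zero]
    · have hs : exitT S (g i) (dirOf ke) - 1 = (exitT S (g i) (dirOf ke) - 2) + 1 := by
        omega
      apply hneg
      show shiftP (endC S (g i) (dirOf ke)) (negD (dirOf ke)) ∈ S
      rw [endC, hs, shiftP_rayP_neg]
      exact exitT_mem (by omega)
  have hlower : 4 * d + 6 + 4 * offLf.card ≤ E.card := by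
    have hsub : IMG ∪ LA ⊆ E := Finset.union_subset hIMGsub hLAsub
    have := Finset.card_le_card hsub
    rw [Finset.card_union_of_disjoint hdisj2, hIMGcard, hLAcard] at this
    omega
  have hupper : E.card ≤ 4 * BfS.card + Lf.card := by
    rw [hE, card_filter_product Sf (fun b δ => shiftP b δ ∉ S)]
    have hsplit := Finset.sum_filter_add_sum_filter_not Sf
      (fun b => ∃ δ ∈ D6, shiftP b δ ∉ S)
      (fun b => (D6.filter (fun δ => shiftP b δ ∉ S)).card)
    have hzero : ∀ b ∈ Sf.filter (fun b => ¬ ∃ δ ∈ D6, shiftP b δ ∉ S),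
        (D6.filter (fun δ => shiftP b δ ∉ S)).card = 0 := by
      intro b hb
      rw [Finset.card_eq_zero, Finset.filter_eq_empty_iff]
      intro δ hδ
      have := (Finset.mem_filter.mp hb).2
      push_neg at this
      simp only [Decidable.not_not]
      exact this δ hδ
    have hbound : ∀ b ∈ BfS, (D6.filter (fun δ => shiftP b δ ∉ S)).card
        ≤ 4 + (if b ∈ Lf then 1 else 0) := by
      intro b hb
      have hbSf : b ∈ Sf := (Finset.mem_filter.mp hb).1
      have hbS : b ∈ S := by rwa [hSf, Set.Finite.mem_toFinset] at hbSf
      have htot := Finset.card_filter_add_card_filter_not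
        (s := D6) (p := fun δ => shiftP b δ ∈ S)
      rw [D6_card] at htot
      obtain ⟨δ1, hδ1, hin1⟩ := hnbr b hbS
      have hins1 : 0 < (D6.filter (fun δ => shiftP b δ ∈ S)).card :=
        Finset.card_pos.mpr ⟨δ1, Finset.mem_filter.mpr ⟨hδ1, hin1⟩⟩
      have heqf : D6.filter (fun δ => shiftP b δ ∉ S)
          = D6.filter (fun δ => ¬ shiftP b δ ∈ S) := rfl
      by_cases hl : (D6.filter (fun δ => shiftP b δ ∈ S)).card = 1
      · have hbLf : b ∈ Lf := Finset.mem_filter.mpr ⟨hbSf, hl⟩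
        rw [if_pos hbLf, heqf]
        omega
      · rw [if_neg ?_, heqf]
        · omega
        · intro hbLf
          exact hl (Finset.mem_filter.mp hbLf).2
    calc (∑ b ∈ Sf, (D6.filter (fun δ => shiftP b δ ∉ S)).card)
        = (∑ b ∈ BfS, (D6.filter (fun δ => shiftP b δ ∉ S)).card) := by
          rw [← hsplit, Finset.sum_congr rfl hzero]
          simp [hBfS]
      _ ≤ ∑ b ∈ BfS, (4 + (if b ∈ Lf then 1 else 0)) := Finset.sum_le_sum hbound
      _ = 4 * BfS.card + (BfS.filter (fun b => b ∈ Lf)).card := by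
          rw [Finset.sum_add_distrib, Finset.sum_const, smul_eq_mul, mul_comm,
            Finset.sum_boole]
          simp
      _ ≤ 4 * BfS.card + Lf.card := by
          have : BfS.filter (fun b => b ∈ Lf) ⊆ Lf := by
            intro b hb; exact (Finset.mem_filter.mp hb).2
          have := Finset.card_le_card this
          omega
  omega

end Stmt1Aux

/-- For a simply-connected shape `S`, the number of outer boundary
points of `S` is at least the diameter of `S` (w.r.t. `dist_S`). -/
theorem stmt1 (S : Set (ℤ × ℤ)) (h : SimplyConnectedShape S) :
    shapeDiam S ≤ {v | IsOuterBoundaryPt S v}.ncard := by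
  obtain ⟨⟨⟨hfin, hne⟩, hconn⟩, hholes⟩ := h
  have hset : {v | IsOuterBoundaryPt S v} = {v | IsBoundaryPt S v} := by
    ext b
    simp only [Set.mem_setOf_eq]
    constructor
    · rintro ⟨hb, w, hadj, hw, _⟩
      exact ⟨hb, w, hadj, hw⟩
    · rintro ⟨hb, w, hadj, hw⟩
      refine ⟨hb, w, hadj, hw, ?_⟩
      intro hfinW
      exact hholes w ⟨hw, hfinW⟩
  rw [hset, shapeDiam]
  apply csSup_le
  · obtain ⟨u0, hu0⟩ := hne
    exact ⟨0, u0, hu0, u0, hu0, by simp [distS]⟩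
  · rintro b ⟨u, hu, v, hv, rfl⟩
    exact Stmt1Aux.key S hfin hconn hu hv
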